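/- In the BCK-algebra B given by Table 2, the BCK-sequences starting from x = 3 and y = 5 satisfy x_k = 1 for all k ≥ 1, y_1 = 2, y_2 = 1, and y_k = 0 for all k ≥ 3; in particular x_4 · y_3 = 1 ≠ 0, so these BCK-sequences cannot be prolonged. -/

import Mathlib

/-! Both BCK-sequences become constant as soon as two consecutive terms agree on an element `a`
with `a·(a·a) = a`, since the recurrence then reproduces `a`. Table 2 gives `x_1 = x_2 = 1` and
`y_3 = y_4 = 0`, so `x_4·y_3 = 1·0 = 1 ≠ 0` violates `x_4 ≤ y_3`. -/

/-- The operation of Table 2 on `B = {0,1,2,3,4,5}`. -/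
def tableB : Fin 6 → Fin 6 → Fin 6 :=
  ![![0,0,0,0,0,0],
    ![1,0,0,0,0,0],
    ![2,2,0,0,0,0],
    ![3,2,1,0,1,1],
    ![4,4,4,4,0,0],
    ![5,4,4,4,1,0]]

/-- The pair of BCK-sequences `(x_k, y_k)` determined by starting elements
`x, y`:  `x_0 = x`, `y_0 = y`, `x_1 = y·(y·x)`, `y_1 = x·(x·y)`, and
`x_k = x_{k-2}·(x_{k-2}·x_{k-1})`, `y_k = y_{k-2}·(y_{k-2}·y_{k-1})` for `k ≥ 2`. -/
def bckPair {X : Type*} (op : X → X → X) (x y : X) : ℕ → X × X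
  | 0 => (x, y)
  | 1 => (op y (op y x), op x (op x y))
  | k + 2 =>
      (op (bckPair op x y k).1 (op (bckPair op x y k).1 (bckPair op x y (k + 1)).1),
       op (bckPair op x y k).2 (op (bckPair op x y k).2 (bckPair op x y (k + 1)).2))

section BCKSequences

variable {X : Type*} (op : X → X → X)

theorem bckPair_swap (x y : X) : ∀ n, bckPair op y x n = (bckPair op x y n).swap
  | 0 => rfl
  | 1 => rfl
  | k + 2 => by rw [bckPair, bckPair, bckPair_swap x y k, bckPair_swap x y (k + 1)]; rfl

theorem bckPair_fst_eq_of_succ_eq {x y a : X} {k : ℕ} (hk : (bckPair op x y k).1 = a)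
    (hk₁ : (bckPair op x y (k + 1)).1 = a) (ha : op a (op a a) = a) :
    ∀ n, k ≤ n → (bckPair op x y n).1 = a := by
  have hconst : ∀ m, (bckPair op x y (k + m)).1 = a ∧ (bckPair op x y (k + m + 1)).1 = a := by
    intro m
    induction m with
    | zero => exact ⟨hk, hk₁⟩
    | succ m ih =>
      refine ⟨ih.2, ?_⟩
      change op (bckPair op x y (k + m)).1
        (op (bckPair op x y (k + m)).1 (bckPair op x y (k + m + 1)).1) = a
      rw [ih.1, ih.2, ha]
  intro n hn
  obtain ⟨m, rfl⟩ := Nat.exists_eq_add_of_le hn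
  exact (hconst m).1

theorem bckPair_snd_eq_of_succ_eq {x y a : X} {k : ℕ} (hk : (bckPair op x y k).2 = a)
    (hk₁ : (bckPair op x y (k + 1)).2 = a) (ha : op a (op a a) = a) :
    ∀ n, k ≤ n → (bckPair op x y n).2 = a := by
  simp only [← Prod.fst_swap, ← bckPair_swap] at hk hk₁ ⊢
  exact bckPair_fst_eq_of_succ_eq op hk hk₁ ha

end BCKSequences

/-- In the BCK-algebra `B` given by Table 2, the BCK-sequences starting from
`x = 3` and `y = 5` satisfy `x_k = 1` for all `k ≥ 1`, `y_1 = 2`, `y_2 = 1`,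
and `y_k = 0` for all `k ≥ 3`; in particular `x_4 · y_3 = 1 ≠ 0`, so these
BCK-sequences cannot be prolonged. -/
theorem tableB_sequences_cannot_be_prolonged :
    (∀ k : ℕ, 1 ≤ k → (bckPair tableB 3 5 k).1 = 1) ∧
    (bckPair tableB 3 5 1).2 = 2 ∧
    (bckPair tableB 3 5 2).2 = 1 ∧
    (∀ k : ℕ, 3 ≤ k → (bckPair tableB 3 5 k).2 = 0) ∧
    tableB (bckPair tableB 3 5 4).1 (bckPair tableB 3 5 3).2 = 1 ∧
    (1 : Fin 6) ≠ 0 ∧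
    ¬ (∀ k : ℕ, tableB (bckPair tableB 3 5 (k + 1)).1 (bckPair tableB 3 5 k).2 = 0 ∧
        tableB (bckPair tableB 3 5 (k + 1)).2 (bckPair tableB 3 5 k).1 = 0) := by
  refine ⟨?_, by decide, by decide, ?_, by decide, by decide, fun h => absurd (h 3).1 (by decide)⟩
  · exact bckPair_fst_eq_of_succ_eq tableB (k := 1) (by decide) (by decide) (by decide)
  · exact bckPair_snd_eq_of_succ_eq tableB (k := 3) (by decide) (by decide) (by decide)
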